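/- arXiv:math/0503012 — 2 statements merged into one kernel-verified Lean document; each statement's English description precedes it below -/
import Mathlib

section
/- Let M, N be two (not necessarily distinct) matchings on [2n] and let s, t ∈ {cr, ne} (possibly s = t). If the multiset of values of s on T(M,l) equals the multiset of values of t on T(N,l) for l = 0 and l = 1, then these multisets are equal for every l ≥ 0. -/
/-- Number of crossings of a matching given by its set of edges `(a, b)` with `a < b`:
unordered pairs of edges `e, f` with `min e < min f < max e < max f`. -/
def crStat (s : Finset (ℕ × ℕ)) : ℕ :=
  ((s ×ˢ s).filter fun p => p.1.1 < p.2.1 ∧ p.2.1 < p.1.2 ∧ p.1.2 < p.2.2).card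

/-- Number of nestings: unordered pairs of edges `e, f` with `min e < min f < max f < max e`. -/
def neStat (s : Finset (ℕ × ℕ)) : ℕ :=
  ((s ×ˢ s).filter fun p => p.1.1 < p.2.1 ∧ p.2.2 < p.1.2).card

/-- Number of camels (separated pairs): unordered pairs of edges `e, f` with `max e < min f`. -/
def caStat (s : Finset (ℕ × ℕ)) : ℕ :=
  ((s ×ˢ s).filter fun p => p.1.2 < p.2.1).card

/-- `s` is the edge set of a matching on `[2n] = {1, …, 2n}`: `n` edges `(a, b)` with
`a < b`, and every vertex of `[2n]` belongs to exactly one edge. -/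
def IsMatching (n : ℕ) (s : Finset (ℕ × ℕ)) : Prop :=
  s.card = n ∧
  (∀ e ∈ s, e.1 < e.2 ∧ 1 ≤ e.1 ∧ e.2 ≤ 2 * n) ∧
  (∀ v : ℕ, 1 ≤ v → v ≤ 2 * n → ∃! e, e ∈ s ∧ (v = e.1 ∨ v = e.2))

/-- The order isomorphism `[2n] → {2, …, 2n+2} \ {x}`. -/
def shiftV (x v : ℕ) : ℕ := if v + 1 < x then v + 1 else v + 2

/-- The matching on `[2n+2]` obtained from a matching on `[2n]` by relabeling its vertices
order-isomorphically as `{2, …, 2n+2} \ {x}` and adding the new first edge `{1, x}`. -/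
def addFirst (x : ℕ) (s : Finset (ℕ × ℕ)) : Finset (ℕ × ℕ) :=
  insert (1, x) (s.image fun e => (shiftV x e.1, shiftV x e.2))

/-- All matchings obtained from `s` by adding a new first edge in all possible ways. -/
def childrenM (s : Finset (ℕ × ℕ)) : Multiset (Finset (ℕ × ℕ)) :=
  (Finset.Icc 2 (2 * s.card + 2)).val.map fun x => addFirst x s

/-- `levelM s l` is the multiset `T(s, l)` of matchings obtained from `s` by `l` successive
additions of a new first edge in all possible ways. -/
def levelM (s : Finset (ℕ × ℕ)) : ℕ → Multiset (Finset (ℕ × ℕ))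
  | 0 => {s}
  | l + 1 => (levelM s l).bind childrenM

/-!
Record a multiset of statistic values by its generating polynomial in `ℕ[X]`. For `s = cr`
(resp. `ne`) consider the gap sequence of a matching on `[2n]`: for each of the `2n + 1` gaps,
the number of arcs passing over it (resp. closed before it). Adding a first edge whose right end
lands in gap `j` raises the statistic by the `j`-th gap value, and the child's gap sequence is
`0`, then the parent's with gap `j` doubled and the gaps left (resp. right) of the new end
raised by one. Hence the generating polynomial of `T(M, l)` is `X ^ s(M) * Φₗ(X ^ g₀, …, X ^ g₂ₙ)`
with `Φₗ` the `l`-th iterate of a linear operator on functions of lists. That operator sends the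
complete homogeneous function `hₖ` to `∑ₘ (∑_{a+b=m} X^a) hₘ₊₁`, the same for both statistics,
so `Φₗ` is symmetric and independent of the statistic. Level `0` gives `s(M) = t(N)`, level `1`
the multiset of gap values (`Φ₁` is the sum), and these determine every level.
-/

open Finset

section CompleteHomogeneous

variable {R : Type*} [CommSemiring R]

def geomSeries (y : R) : PowerSeries R := PowerSeries.mk (y ^ ·)

@[simp]
lemma coeff_geomSeries (n : ℕ) (y : R) : PowerSeries.coeff n (geomSeries y) = y ^ n :=
  PowerSeries.coeff_mk _ _

noncomputable def completeHomog (k : ℕ) (ys : List R) : R :=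
  PowerSeries.coeff k (ys.map geomSeries).prod

@[simp]
lemma completeHomog_zero (ys : List R) : completeHomog 0 ys = 1 := by
  induction ys with
  | nil => simp [completeHomog]
  | cons c ys ih => simpa [completeHomog, PowerSeries.coeff_mul] using ih

@[simp]
lemma completeHomog_nil_succ (k : ℕ) : completeHomog (k + 1) ([] : List R) = 0 := by
  simp [completeHomog, PowerSeries.coeff_one]

lemma completeHomog_cons_succ (k : ℕ) (c : R) (ys : List R) :
    completeHomog (k + 1) (c :: ys) =
      c * completeHomog k (c :: ys) + completeHomog (k + 1) ys := by
  simp only [completeHomog, List.map_cons, List.prod_cons, PowerSeries.coeff_mul,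
    Nat.sum_antidiagonal_succ, coeff_geomSeries, mul_sum, pow_succ']
  simp [add_comm, mul_assoc]

lemma completeHomog_append (k : ℕ) (xs ys : List R) :
    completeHomog k (xs ++ ys) =
      ∑ p ∈ antidiagonal k, completeHomog p.1 xs * completeHomog p.2 ys := by
  simp only [completeHomog, List.map_append, List.prod_append, PowerSeries.coeff_mul]

lemma completeHomog_map_mul (k : ℕ) (u : R) (ys : List R) :
    completeHomog k (ys.map (u * ·)) = u ^ k * completeHomog k ys := by
  have hgeom : geomSeries ∘ (u * ·) = PowerSeries.rescale u ∘ geomSeries := by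
    ext y n; simp [mul_pow]
  rw [completeHomog, List.map_map, hgeom, ← List.map_map, ← map_list_prod,
    PowerSeries.coeff_rescale, completeHomog]

lemma completeHomog_one_cons (k : ℕ) (ys : List R) :
    completeHomog k (1 :: ys) = ∑ r ∈ range (k + 1), completeHomog r ys := by
  rw [← List.singleton_append, completeHomog_append, ← Nat.sum_antidiagonal_swap]
  simp only [Prod.fst_swap, Prod.snd_swap]
  rw [Nat.sum_antidiagonal_eq_sum_range_succ fun a b => completeHomog b [1] * completeHomog a ys]
  simp [completeHomog]

lemma List.Perm.completeHomog_eq {xs ys : List R} (h : xs.Perm ys) (k : ℕ) :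
    completeHomog k xs = completeHomog k ys := by
  rw [completeHomog, (h.map _).prod_eq, completeHomog]

/-- A monomial of degree `a + b + 1` is split at its `(a + 1)`-st smallest variable `y_j`. -/
lemma sum_getD_mul_completeHomog_take_drop (ys : List R) (a b : ℕ) :
    ∑ j ∈ range ys.length,
        ys.getD j 0 * completeHomog a (ys.take (j + 1)) * completeHomog b (ys.drop j) =
      completeHomog (a + b + 1) ys := by
  induction ys generalizing a with
  | nil => simp
  | cons c zs ih =>
    induction a with
    | zero =>
      rw [List.length_cons, sum_range_succ', zero_add, completeHomog_cons_succ, ← ih 0]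
      simp [add_comm]
    | succ a iha =>
      rw [List.length_cons, sum_range_succ'] at iha ⊢
      simp only [List.getD_cons_succ, List.take_succ_cons, List.drop_succ_cons,
        List.getD_cons_zero, List.drop_zero, List.take_zero] at iha ⊢
      rw [show a + 1 + b + 1 = a + b + 1 + 1 by omega, completeHomog_cons_succ (a + b + 1), ← iha,
        show a + b + 1 + 1 = a + 1 + b + 1 by omega, ← ih (a + 1)]
      simp only [completeHomog_cons_succ, completeHomog_nil_succ, add_zero, mul_add, add_mul,
        sum_add_distrib, mul_sum]
      simp only [mul_assoc, mul_left_comm c]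
      ring

end CompleteHomogeneous

section GapInsertion

variable {R : Type*} [CommSemiring R]

/-- A gap value `g` is stored as the monomial `q ^ g`. Adding a first edge whose right end lies in
gap `j` turns the gap sequence `ys` into `insertGap q 1 ys j` for crossings and into
`insertGap 1 q ys j` for nestings. -/
def insertGap (u v : R) (ys : List R) (j : ℕ) : List R :=
  1 :: ((ys.take (j + 1)).map (u * ·) ++ (ys.drop j).map (v * ·))

lemma completeHomog_insertGap (u v : R) (ys : List R) (j k : ℕ) :
    completeHomog k (insertGap u v ys j) =
      ∑ r ∈ range (k + 1), ∑ p ∈ antidiagonal r, u ^ p.1 * v ^ p.2 *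
        (completeHomog p.1 (ys.take (j + 1)) * completeHomog p.2 (ys.drop j)) := by
  simp only [insertGap, completeHomog_one_cons, completeHomog_append, completeHomog_map_mul]
  exact sum_congr rfl fun _ _ => sum_congr rfl fun _ _ => mul_mul_mul_comm _ _ _ _

lemma sum_getD_mul_completeHomog_insertGap (u v : R) (ys : List R) (k : ℕ) :
    ∑ j ∈ range ys.length, ys.getD j 0 * completeHomog k (insertGap u v ys j) =
      ∑ r ∈ range (k + 1), (∑ p ∈ antidiagonal r, u ^ p.1 * v ^ p.2) *
        completeHomog (r + 1) ys := by
  simp only [completeHomog_insertGap, mul_sum, sum_mul]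
  rw [sum_comm]
  refine sum_congr rfl fun r _ => ?_
  rw [sum_comm]
  refine sum_congr rfl fun p hp => ?_
  rw [HasAntidiagonal.mem_antidiagonal] at hp
  simp only [mul_left_comm (ys.getD _ 0) (u ^ p.1 * v ^ p.2), ← mul_assoc (ys.getD _ 0),
    ← mul_sum, sum_getD_mul_completeHomog_take_drop, hp]

def stepOp (u v : R) : (List R → R) →ₗ[R] (List R → R) where
  toFun Φ ys := ∑ j ∈ range ys.length, ys.getD j 0 * Φ (insertGap u v ys j)
  map_add' Φ Ψ := by
    ext ys; simp only [Pi.add_apply, mul_add, sum_add_distrib]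
  map_smul' c Φ := by
    ext ys; simp only [Pi.smul_apply, smul_eq_mul, RingHom.id_apply, mul_sum, mul_left_comm]

lemma stepOp_apply (u v : R) (Φ : List R → R) (ys : List R) :
    stepOp u v Φ ys = ∑ j ∈ range ys.length, ys.getD j 0 * Φ (insertGap u v ys j) :=
  rfl

lemma stepOp_one_apply (u v : R) (ys : List R) : stepOp u v 1 ys = ys.sum := by
  induction ys with
  | nil => rfl
  | cons c ys ih =>
    simp only [stepOp_apply, Pi.one_apply, mul_one] at ih ⊢
    rw [List.length_cons, sum_range_succ', List.sum_cons, ← ih]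
    simp [add_comm]

lemma stepOp_completeHomog (u v : R) (k : ℕ) :
    stepOp u v (completeHomog k) =
      ∑ r ∈ range (k + 1), (∑ p ∈ antidiagonal r, u ^ p.1 * v ^ p.2) • completeHomog (r + 1) := by
  ext ys
  simp only [stepOp_apply, sum_getD_mul_completeHomog_insertGap, Finset.sum_apply,
    Pi.smul_apply, smul_eq_mul]

variable (R) in
def homogSpan : Submodule R (List R → R) := Submodule.span R (Set.range completeHomog)

lemma one_mem_homogSpan : (1 : List R → R) ∈ homogSpan R := by
  have : (1 : List R → R) = completeHomog 0 := funext fun ys => (completeHomog_zero ys).symm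
  exact this ▸ Submodule.subset_span ⟨0, rfl⟩

lemma stepOp_mem_homogSpan (u v : R) {Φ : List R → R} (hΦ : Φ ∈ homogSpan R) :
    stepOp u v Φ ∈ homogSpan R := by
  refine (Submodule.span_le (p := (homogSpan R).comap (stepOp u v))).2 ?_ hΦ
  rintro _ ⟨k, rfl⟩
  rw [SetLike.mem_coe, Submodule.mem_comap, stepOp_completeHomog]
  exact sum_mem fun r _ => Submodule.smul_mem _ _ (Submodule.subset_span ⟨r + 1, rfl⟩)

lemma stepOp_swap_eqOn_homogSpan (q : R) :
    Set.EqOn (stepOp q 1) (stepOp 1 q) (homogSpan R) := by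
  refine LinearMap.eqOn_span' ?_
  rintro _ ⟨k, rfl⟩
  simp only [stepOp_completeHomog, one_pow, mul_one, one_mul]
  exact sum_congr rfl fun r _ => by rw [← Nat.sum_antidiagonal_swap]; rfl

lemma apply_eq_of_perm_of_mem_homogSpan {Φ : List R → R} (hΦ : Φ ∈ homogSpan R)
    {xs ys : List R} (h : xs.Perm ys) : Φ xs = Φ ys := by
  induction hΦ using Submodule.span_induction with
  | mem _ hmem => obtain ⟨k, rfl⟩ := hmem; exact h.completeHomog_eq k
  | zero => rfl
  | add _ _ _ _ h₁ h₂ => simp only [Pi.add_apply, h₁, h₂]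
  | smul _ _ _ h₁ => simp only [Pi.smul_apply, h₁]

lemma iterate_stepOp_mem_homogSpan (u v : R) (l : ℕ) : (stepOp u v)^[l] 1 ∈ homogSpan R := by
  induction l with
  | zero => exact one_mem_homogSpan
  | succ l ih => rw [Function.iterate_succ_apply']; exact stepOp_mem_homogSpan u v ih

lemma iterate_stepOp_swap (q : R) (l : ℕ) : (stepOp q 1)^[l] 1 = (stepOp 1 q)^[l] 1 := by
  induction l with
  | zero => rfl
  | succ l ih =>
    rw [Function.iterate_succ_apply', Function.iterate_succ_apply', ← ih]
    exact stepOp_swap_eqOn_homogSpan q (iterate_stepOp_mem_homogSpan q 1 l)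

end GapInsertion

section Matchings

open Polynomial

noncomputable def genPoly (s : Multiset ℕ) : ℕ[X] := (s.map (X ^ ·)).sum

lemma coeff_genPoly (s : Multiset ℕ) (a : ℕ) : (genPoly s).coeff a = s.count a := by
  induction s using Multiset.induction_on with
  | empty => simp [genPoly]
  | cons b s ih =>
    simp only [genPoly, Multiset.map_cons, Multiset.sum_cons, coeff_add, coeff_X_pow] at ih ⊢
    rw [ih, Multiset.count_cons, add_comm, eq_comm]

lemma genPoly_injective : Function.Injective genPoly := fun s t h =>
  Multiset.ext.2 fun a => by simpa [coeff_genPoly] using congrArg (coeff · a) h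

lemma genPoly_coe (l : List ℕ) : genPoly l = (l.map (X ^ ·)).sum := by
  simp [genPoly]

lemma strictMono_shiftV (x : ℕ) : StrictMono (shiftV x) := fun u v h => by
  unfold shiftV; split_ifs <;> omega

lemma shiftEdge_injective (x : ℕ) :
    Function.Injective fun e : ℕ × ℕ => (shiftV x e.1, shiftV x e.2) :=
  (strictMono_shiftV x).injective.prodMap (strictMono_shiftV x).injective

def arcsOver (M : Finset (ℕ × ℕ)) (i : ℕ) : ℕ := (M.filter fun e => e.1 ≤ i ∧ i < e.2).card

def arcsClosed (M : Finset (ℕ × ℕ)) (i : ℕ) : ℕ := (M.filter fun e => e.2 ≤ i).card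

def crGaps (M : Finset (ℕ × ℕ)) : List ℕ := (List.range (2 * M.card + 1)).map (arcsOver M)

def neGaps (M : Finset (ℕ × ℕ)) : List ℕ := (List.range (2 * M.card + 1)).map (arcsClosed M)

variable {M : Finset (ℕ × ℕ)}

lemma one_mk_notMem_image (hM : ∀ e ∈ M, 1 ≤ e.1) (x : ℕ) :
    (1, x) ∉ M.image fun e => (shiftV x e.1, shiftV x e.2) := by
  simp only [mem_image, Prod.mk.injEq, not_exists, not_and]
  intro e he h _
  have := hM e he
  unfold shiftV at h; split_ifs at h <;> omega

lemma one_le_of_mem_addFirst {x : ℕ} {e : ℕ × ℕ} (he : e ∈ addFirst x M) : 1 ≤ e.1 := by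
  simp only [addFirst, mem_insert, mem_image] at he
  rcases he with rfl | ⟨f, -, rfl⟩
  · rfl
  · unfold shiftV; split_ifs <;> omega

lemma card_addFirst (hM : ∀ e ∈ M, 1 ≤ e.1) (x : ℕ) : (addFirst x M).card = M.card + 1 := by
  rw [addFirst, card_insert_of_notMem (one_mk_notMem_image hM x),
    card_image_of_injective _ (shiftEdge_injective x)]

lemma card_filter_addFirst (hM : ∀ e ∈ M, 1 ≤ e.1) (x : ℕ) (Q : ℕ × ℕ → Prop)
    [DecidablePred Q] :
    ((addFirst x M).filter Q).card =
      (if Q (1, x) then 1 else 0) + (M.filter fun e => Q (shiftV x e.1, shiftV x e.2)).card := by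
  rw [addFirst, filter_insert, filter_image]
  split_ifs
  · rw [card_insert_of_notMem fun h => one_mk_notMem_image hM x (image_subset_image
      (filter_subset _ M) h), card_image_of_injective _ (shiftEdge_injective x), add_comm]
  · rw [card_image_of_injective _ (shiftEdge_injective x), zero_add]

lemma card_filter_addFirst_of_iff (hM : ∀ e ∈ M, 1 ≤ e.1) (x : ℕ) (Q Q' : ℕ × ℕ → Prop)
    [DecidablePred Q] [DecidablePred Q'] (hQ : ∀ e ∈ M, Q (shiftV x e.1, shiftV x e.2) ↔ Q' e) :
    ((addFirst x M).filter Q).card = (if Q (1, x) then 1 else 0) + (M.filter Q').card := by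
  rw [card_filter_addFirst hM, filter_congr hQ]

lemma card_filter_addFirst_product (hM : ∀ e ∈ M, 1 ≤ e.1) (x : ℕ)
    (P : ℕ × ℕ → ℕ × ℕ → Prop) [∀ e f, Decidable (P e f)] (hP : ∀ e f, P e f → e.1 < f.1)
    (hP_shift : ∀ e f, P (shiftV x e.1, shiftV x e.2) (shiftV x f.1, shiftV x f.2) ↔ P e f) :
    ((addFirst x M ×ˢ addFirst x M).filter fun p => P p.1 p.2).card =
      ((M ×ˢ M).filter fun p => P p.1 p.2).card +
        (M.filter fun e => P (1, x) (shiftV x e.1, shiftV x e.2)).card := by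
  have hnot := one_mk_notMem_image hM x
  have hback : ∀ e ∈ M, ¬ P (shiftV x e.1, shiftV x e.2) (1, x) := fun e he h => by
    have := hP _ _ h
    unfold shiftV at this; split_ifs at this <;> omega
  simp only [card_filter, sum_product, addFirst, sum_insert hnot,
    sum_image fun e _ f _ h => shiftEdge_injective x h, hP_shift,
    if_neg fun h => (hP _ _ h).false]
  rw [zero_add, add_comm, sum_congr rfl fun e he => by rw [if_neg (hback e he), zero_add]]

lemma crStat_addFirst (hM : ∀ e ∈ M, 1 ≤ e.1) (j : ℕ) :
    crStat (addFirst (j + 2) M) = crStat M + arcsOver M j := by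
  unfold crStat
  rw [card_filter_addFirst_product hM (j + 2) (fun e f => e.1 < f.1 ∧ f.1 < e.2 ∧ e.2 < f.2)
    (fun _ _ h => h.1) fun e f => by simp only [(strictMono_shiftV _).lt_iff_lt]]
  congr 2
  refine filter_congr fun e he => ?_
  have := hM e he
  unfold shiftV; split_ifs <;> omega

lemma neStat_addFirst (hM : ∀ e ∈ M, 1 ≤ e.1) (j : ℕ) :
    neStat (addFirst (j + 2) M) = neStat M + arcsClosed M j := by
  unfold neStat
  rw [card_filter_addFirst_product hM (j + 2) (fun e f => e.1 < f.1 ∧ f.2 < e.2)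
    (fun _ _ h => h.1) fun e f => by simp only [(strictMono_shiftV _).lt_iff_lt]]
  congr 2
  refine filter_congr fun e he => ?_
  have := hM e he
  unfold shiftV; split_ifs <;> omega

lemma map_range_eq_insertGap {n j : ℕ} (hj : j < n) (f g : ℕ → ℕ) (u v : ℕ[X]) (h0 : g 0 = 0)
    (hmid : ∀ i ≤ j, X ^ g (i + 1) = u * X ^ f i)
    (hlate : ∀ i, j ≤ i → X ^ g (i + 2) = v * X ^ f i) :
    ((List.range (n + 2)).map g).map (X ^ ·) =
      insertGap u v (((List.range n).map f).map (X ^ ·)) j := by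
  have hdrop : (List.range n).drop j = (List.range (n - j)).map (j + ·) := by
    conv_lhs => rw [show n = j + (n - j) by omega, List.range_add]
    exact List.drop_left' (by simp)
  rw [show n + 2 = j + 1 + 1 + (n - j) by omega, List.range_add, List.range_succ_eq_map]
  simp only [insertGap, List.map_append, List.map_cons, List.map_map, h0, pow_zero,
    ← List.map_take, ← List.map_drop, List.take_range, hdrop, List.cons_append]
  rw [min_eq_left hj]
  congr 2 <;> refine List.map_congr_left fun i hi => ?_
  · exact hmid i (by simpa [Nat.lt_succ_iff] using hi)
  · simpa [show j + 1 + 1 + i = j + i + 2 by omega] using hlate (j + i) (by omega)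

lemma crGaps_addFirst (hM : ∀ e ∈ M, 1 ≤ e.1) {j : ℕ} (hj : j < 2 * M.card + 1) :
    (crGaps (addFirst (j + 2) M)).map (X ^ ·) =
      insertGap X 1 ((crGaps M).map ((X : ℕ[X]) ^ ·)) j := by
  rw [crGaps, crGaps, card_addFirst hM, show 2 * (M.card + 1) + 1 = 2 * M.card + 1 + 2 by ring]
  refine map_range_eq_insertGap hj _ _ _ _ ?_ (fun i hi => ?_) (fun i hi => ?_) <;>
    simp only [arcsOver]
  · rw [card_filter_addFirst hM, filter_false_of_mem fun e _ => by
      unfold shiftV; split_ifs <;> omega]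
    simp
  · rw [card_filter_addFirst_of_iff hM _ _ (fun e => e.1 ≤ i ∧ i < e.2) fun e he => by
      unfold shiftV; split_ifs <;> omega, if_pos (by simp; omega), pow_add]
    simp
  · rw [card_filter_addFirst_of_iff hM _ _ (fun e => e.1 ≤ i ∧ i < e.2) fun e he => by
      unfold shiftV; split_ifs <;> omega, if_neg (by simp; omega)]
    simp

lemma neGaps_addFirst (hM : ∀ e ∈ M, 1 ≤ e.1) {j : ℕ} (hj : j < 2 * M.card + 1) :
    (neGaps (addFirst (j + 2) M)).map (X ^ ·) =
      insertGap 1 X ((neGaps M).map ((X : ℕ[X]) ^ ·)) j := by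
  rw [neGaps, neGaps, card_addFirst hM, show 2 * (M.card + 1) + 1 = 2 * M.card + 1 + 2 by ring]
  refine map_range_eq_insertGap hj _ _ _ _ ?_ (fun i hi => ?_) (fun i hi => ?_) <;>
    simp only [arcsClosed]
  · rw [card_filter_addFirst hM, filter_false_of_mem fun e _ => by
      unfold shiftV; split_ifs <;> omega]
    simp
  · rw [card_filter_addFirst_of_iff hM _ _ (fun e => e.2 ≤ i) fun e he => by
      unfold shiftV; split_ifs <;> omega, if_neg (by simp; omega)]
    simp
  · rw [card_filter_addFirst_of_iff hM _ _ (fun e => e.2 ≤ i) fun e he => by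
      unfold shiftV; split_ifs <;> omega, if_pos (by simp; omega), pow_add]
    simp

lemma levelM_succ_eq_bind_childrenM (M : Finset (ℕ × ℕ)) (l : ℕ) :
    levelM M (l + 1) = (childrenM M).bind fun c => levelM c l := by
  induction l with
  | zero => simpa [levelM] using (Multiset.bind_singleton (childrenM M) id).symm
  | succ l ih => rw [levelM, ih, Multiset.bind_assoc]; rfl

lemma genPoly_bind_childrenM (F : Finset (ℕ × ℕ) → Multiset ℕ) :
    genPoly ((childrenM M).bind F) =
      ∑ j ∈ range (2 * M.card + 1), genPoly (F (addFirst (j + 2) M)) := by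
  rw [genPoly, Multiset.map_bind, Multiset.sum_bind, childrenM, Multiset.map_map,
    ← sum_eq_multiset_sum, ← Ico_add_one_right_eq_Icc, sum_Ico_eq_sum_range]
  exact sum_congr (by congr 1) fun j _ => by rw [add_comm]; rfl

lemma genPoly_levelM (stat : Finset (ℕ × ℕ) → ℕ) (gaps : Finset (ℕ × ℕ) → List ℕ) (u v : ℕ[X])
    (hlen : ∀ M, (gaps M).length = 2 * M.card + 1)
    (hstat : ∀ M, (∀ e ∈ M, 1 ≤ e.1) → ∀ j < 2 * M.card + 1,
      stat (addFirst (j + 2) M) = stat M + (gaps M).getD j 0)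
    (hgaps : ∀ M, (∀ e ∈ M, 1 ≤ e.1) → ∀ j < 2 * M.card + 1,
      (gaps (addFirst (j + 2) M)).map (X ^ ·) = insertGap u v ((gaps M).map (X ^ ·)) j)
    (l : ℕ) (hM : ∀ e ∈ M, 1 ≤ e.1) :
    genPoly ((levelM M l).map stat) =
      X ^ stat M * (stepOp u v)^[l] 1 ((gaps M).map (X ^ ·)) := by
  induction l generalizing M with
  | zero => simp [levelM, genPoly]
  | succ l ih =>
    rw [levelM_succ_eq_bind_childrenM, Multiset.map_bind, genPoly_bind_childrenM,
      Function.iterate_succ_apply', stepOp_apply, List.length_map, hlen, mul_sum]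
    refine sum_congr rfl fun j hj => ?_
    rw [mem_range] at hj
    rw [ih (fun e => one_le_of_mem_addFirst), hstat M hM j hj, hgaps M hM j hj,
      List.getD_eq_getElem _ _ (by rwa [hlen]),
      List.getD_eq_getElem _ _ (by simpa [hlen] using hj), List.getElem_map, pow_add, mul_assoc]

lemma exists_genPoly_levelM {s : Finset (ℕ × ℕ) → ℕ} (hs : s = crStat ∨ s = neStat)
    (hM : ∀ e ∈ M, 1 ≤ e.1) :
    ∃ gs : List ℕ, ∀ l, genPoly ((levelM M l).map s) =
      X ^ s M * (stepOp X 1)^[l] 1 (gs.map (X ^ ·)) := by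
  rcases hs with rfl | rfl
  · exact ⟨crGaps M, fun l => genPoly_levelM crStat crGaps X 1 (by simp [crGaps])
      (fun M hM j hj => by simp [crStat_addFirst hM, crGaps, hj])
      (fun M hM j hj => crGaps_addFirst hM hj) l hM⟩
  · refine ⟨neGaps M, fun l => ?_⟩
    rw [iterate_stepOp_swap]
    exact genPoly_levelM neStat neGaps 1 X (by simp [neGaps])
      (fun M hM j hj => by simp [neStat_addFirst hM, neGaps, hj])
      (fun M hM j hj => neGaps_addFirst hM hj) l hM

end Matchings

open Polynomial in
/-- for `s, t ∈ {cr, ne}` (possibly `s = t`), if the multiset of values of `s` on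
`T(M,l)` equals the multiset of values of `t` on `T(N,l)` for `l = 0, 1`, then they are equal
for every `l ≥ 0`. -/
theorem cr_ne_coincide_of_first_two_levels
    (n : ℕ) (M N : Finset (ℕ × ℕ)) (hM : IsMatching n M) (hN : IsMatching n N)
    (s t : Finset (ℕ × ℕ) → ℕ)
    (hs : s = crStat ∨ s = neStat) (ht : t = crStat ∨ t = neStat)
    (h0 : (levelM M 0).map s = (levelM N 0).map t)
    (h1 : (levelM M 1).map s = (levelM N 1).map t) :
    ∀ l : ℕ, (levelM M l).map s = (levelM N l).map t := by
  obtain ⟨gsM, hgsM⟩ := exists_genPoly_levelM hs fun e he => (hM.2.1 e he).2.1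
  obtain ⟨gsN, hgsN⟩ := exists_genPoly_levelM ht fun e he => (hN.2.1 e he).2.1
  have hroot : s M = t N := by simpa [levelM] using h0
  have hperm : gsM.Perm gsN := by
    have h1' := congrArg genPoly h1
    rw [hgsM, hgsN, hroot, Function.iterate_one, stepOp_one_apply, stepOp_one_apply] at h1'
    refine Multiset.coe_eq_coe.1 (genPoly_injective ?_)
    simpa [genPoly_coe] using mul_left_cancel₀ (pow_ne_zero _ X_ne_zero) h1'
  intro l
  apply genPoly_injective
  rw [hgsM, hgsN, hroot,
    apply_eq_of_perm_of_mem_homogSpan (iterate_stepOp_mem_homogSpan _ _ l) (hperm.map _)]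
end

section
/- For every abelian group A, every α, β ∈ A, and every matching N on [2n], the first term of the sequence seq_{α,β}(N) equals s_{α,β}(N) = cr(N)·α + ne(N)·β. -/
/-- The map `R_{α,β,i}` (for `1 ≤ i ≤ l`) sending `(x_1, …, x_l)` to the sequence of length
`l+2` consisting of `x_i`, then `x_1, …, x_i` each increased by `x_i - x_1 + α`, then
`x_i, …, x_l` each increased by `x_i - x_1 + β`. -/
def Rmap {A : Type*} [AddCommGroup A] (α β : A) (i : ℕ) (u : List A) : List A :=
  u.getD (i - 1) 0 ::
    ((u.take i).map (fun y => y + (u.getD (i - 1) 0 - u.getD 0 0 + α)) ++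
     (u.drop (i - 1)).map (fun y => y + (u.getD (i - 1) 0 - u.getD 0 0 + β)))

/-- `IsSeq α β s u` holds iff `u = seq_{α,β}(s)`: defined by `seq_{α,β}(∅) = (0)` and
`seq_{α,β}(N) = R_{α,β,x-1}(seq_{α,β}(M))` whenever `N` arises from `M` by adding the
first edge `{1, x}`. -/
inductive IsSeq {A : Type*} [AddCommGroup A] (α β : A) : Finset (ℕ × ℕ) → List A → Prop
  | empty : IsSeq α β ∅ [(0 : A)]
  | step (s : Finset (ℕ × ℕ)) (u : List A) (x : ℕ) (hu : IsSeq α β s u)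
      (h2 : 2 ≤ x) (hx : x ≤ 2 * s.card + 2) :
      IsSeq α β (addFirst x s) (Rmap α β (x - 1) u)

set_option linter.unusedSectionVars false

lemma two_le_shiftV (x v : ℕ) (hv : 1 ≤ v) : 2 ≤ shiftV x v := by unfold shiftV; split <;> omega

lemma shiftV_lt_iff (x v w : ℕ) : shiftV x v < shiftV x w ↔ v < w := by
  unfold shiftV; split <;> split <;> omega

lemma shiftV_lt_left {x g : ℕ} (hg : g ≤ x) (v : ℕ) : shiftV x v < g ↔ v + 1 < g := by
  unfold shiftV; split <;> omega

lemma shiftV_lt_right {x g : ℕ} (hg : x < g) (v : ℕ) : shiftV x v < g ↔ v + 2 < g := by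
  unfold shiftV; split <;> omega

lemma shiftV_injective (x : ℕ) : Function.Injective (shiftV x) := by
  intro v w h
  rcases lt_trichotomy v w with h'|h'|h' <;>
    [skip; exact h'; skip] <;> [(have := (shiftV_lt_iff x v w).2 h'); (have := (shiftV_lt_iff x w v).2 h')] <;> omega

lemma prod_image_image {α β : Type*} [DecidableEq α] [DecidableEq β] (f : α → β) (s t : Finset α) :
    (s.image f) ×ˢ (t.image f) = (s ×ˢ t).image (Prod.map f f) := by
  ext ⟨a, b⟩
  simp only [Finset.mem_product, Finset.mem_image, Prod.map, Prod.ext_iff, Finset.mem_product]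
  constructor
  · rintro ⟨⟨p, hp, rfl⟩, ⟨q, hq, rfl⟩⟩; exact ⟨(p,q), ⟨hp, hq⟩, rfl, rfl⟩
  · rintro ⟨⟨p, q⟩, ⟨hp, hq⟩, rfl, rfl⟩; exact ⟨⟨p, hp, rfl⟩, ⟨q, hq, rfl⟩⟩

lemma filter_product_insert {p : ℕ × ℕ} {t : Finset (ℕ × ℕ)} (hp : p ∉ t)
    (P : ℕ × ℕ → ℕ × ℕ → Prop) [DecidablePred fun q : (ℕ×ℕ)×(ℕ×ℕ) => P q.1 q.2]
    [DecidablePred (P p)]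
    (hpp : ¬ P p p) (hap : ∀ a ∈ t, ¬ P a p) :
    ((insert p t ×ˢ insert p t).filter fun q => P q.1 q.2).card
      = ((t ×ˢ t).filter fun q => P q.1 q.2).card + (t.filter (P p)).card := by
  have hset : ((insert p t ×ˢ insert p t).filter fun q => P q.1 q.2)
      = ((t ×ˢ t).filter fun q => P q.1 q.2) ∪ (t.filter (P p)).image (Prod.mk p) := by
    ext q
    obtain ⟨a, b⟩ := q
    simp only [Finset.mem_filter, Finset.mem_product, Finset.mem_insert, Finset.mem_union,
      Finset.mem_image, Prod.mk.injEq]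
    constructor
    · rintro ⟨⟨rfl | ha, rfl | hb⟩, hP⟩
      · exact absurd hP hpp
      · exact Or.inr ⟨b, ⟨hb, hP⟩, rfl, rfl⟩
      · exact absurd hP (hap a ha)
      · exact Or.inl ⟨⟨ha, hb⟩, hP⟩
    · rintro (⟨⟨ha, hb⟩, hP⟩ | ⟨c, ⟨hc, hP⟩, rfl, rfl⟩)
      · exact ⟨⟨Or.inr ha, Or.inr hb⟩, hP⟩
      · exact ⟨⟨Or.inl rfl, Or.inr hc⟩, hP⟩
  rw [hset, Finset.card_union_of_disjoint, Finset.card_image_of_injective]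
  · intro c d h; exact (Prod.ext_iff.1 h).2
  · rw [Finset.disjoint_right]
    rintro ⟨a, b⟩ hmem hmem'
    simp only [Finset.mem_image, Prod.mk.injEq] at hmem
    obtain ⟨c, hc, rfl, rfl⟩ := hmem
    exact hp (Finset.mem_filter.1 hmem' |>.1 |> Finset.mem_product.1 |>.1)

lemma lt_shiftV_iff (x v : ℕ) : x < shiftV x v ↔ x ≤ v + 1 := by unfold shiftV; split <;> omega

def cGap (s : Finset (ℕ × ℕ)) (j : ℕ) : ℕ := (s.filter fun e => e.1 < j ∧ j ≤ e.2).card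
def dGap (s : Finset (ℕ × ℕ)) (j : ℕ) : ℕ := (s.filter fun e => e.2 < j).card

section stats
variable {x : ℕ} {s : Finset (ℕ × ℕ)} (hx : 2 ≤ x) (H1 : ∀ e ∈ s, 1 ≤ e.1 ∧ 1 ≤ e.2)

def phi (x : ℕ) : ℕ × ℕ → ℕ × ℕ := fun e => (shiftV x e.1, shiftV x e.2)

lemma phi_injective (x : ℕ) : Function.Injective (phi x) := by
  intro a b h
  obtain ⟨h1, h2⟩ := Prod.ext_iff.1 h
  exact Prod.ext (shiftV_injective x h1) (shiftV_injective x h2)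

include H1 in
lemma notMem_image_phi : (1, x) ∉ s.image (phi x) := by
  intro h
  obtain ⟨e, he, heq⟩ := Finset.mem_image.1 h
  have := two_le_shiftV x e.1 (H1 e he).1
  have := (Prod.ext_iff.1 heq).1
  simp only [phi] at this
  omega

include hx H1 in
lemma crStat_addFirst_s8 : crStat (addFirst x s) = crStat s + cGap s (x - 1) := by
  classical
  have key := filter_product_insert (p := (1, x)) (t := s.image (phi x)) (notMem_image_phi H1)
    (fun a b => a.1 < b.1 ∧ b.1 < a.2 ∧ a.2 < b.2)
    (by simp) ?_
  · rw [addFirst, crStat]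
    show ((insert (1,x) (s.image (phi x)) ×ˢ insert (1,x) (s.image (phi x))).filter _).card = _
    rw [key]
    congr 1
    · -- old pairs
      rw [prod_image_image, Finset.filter_image, Finset.card_image_of_injective _
        (Prod.map_injective.2 ⟨phi_injective x, phi_injective x⟩)]
      rw [crStat]
      congr 1
      apply Finset.filter_congr
      intro q _
      simp only [Prod.map, phi, shiftV_lt_iff, eq_iff_iff]
    · -- pairs with the new edge
      rw [Finset.filter_image, Finset.card_image_of_injective _ (phi_injective x), cGap]
      congr 1
      apply Finset.filter_congr
      intro e he
      have h1 := (H1 e he).1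
      simp only [phi, eq_iff_iff]
      rw [shiftV_lt_left le_rfl, lt_shiftV_iff]
      constructor
      · rintro ⟨-, h2, h3⟩; omega
      · rintro ⟨h2, h3⟩; refine ⟨two_le_shiftV x e.1 h1, by omega, by omega⟩
  · rintro a ha ⟨h1, -⟩
    obtain ⟨e, he, rfl⟩ := Finset.mem_image.1 ha
    have := two_le_shiftV x e.1 (H1 e he).1
    simp only [phi] at h1
    omega

include hx H1 in
lemma neStat_addFirst_s8 : neStat (addFirst x s) = neStat s + dGap s (x - 1) := by
  classical
  have key := filter_product_insert (p := (1, x)) (t := s.image (phi x)) (notMem_image_phi H1)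
    (fun a b => a.1 < b.1 ∧ b.2 < a.2)
    (by simp) ?_
  · rw [addFirst, neStat]
    show ((insert (1,x) (s.image (phi x)) ×ˢ insert (1,x) (s.image (phi x))).filter _).card = _
    rw [key]
    congr 1
    · rw [prod_image_image, Finset.filter_image, Finset.card_image_of_injective _
        (Prod.map_injective.2 ⟨phi_injective x, phi_injective x⟩)]
      rw [neStat]
      congr 1
      apply Finset.filter_congr
      intro q _
      simp only [Prod.map, phi, shiftV_lt_iff, eq_iff_iff]
    · rw [Finset.filter_image, Finset.card_image_of_injective _ (phi_injective x), dGap]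
      congr 1
      apply Finset.filter_congr
      intro e he
      have h1 := (H1 e he).1
      simp only [phi, eq_iff_iff]
      rw [shiftV_lt_left le_rfl]
      constructor
      · rintro ⟨-, h2⟩; omega
      · rintro h2; exact ⟨two_le_shiftV x e.1 h1, by omega⟩
  · rintro a ha ⟨h1, -⟩
    obtain ⟨e, he, rfl⟩ := Finset.mem_image.1 ha
    have := two_le_shiftV x e.1 (H1 e he).1
    simp only [phi] at h1
    omega

include H1 in
lemma card_addFirst_s8 : (addFirst x s).card = s.card + 1 := by
  rw [addFirst]
  show (insert (1,x) (s.image (phi x))).card = _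
  rw [Finset.card_insert_of_notMem (notMem_image_phi H1),
    Finset.card_image_of_injective _ (phi_injective x)]

end stats

section gaps
variable {x : ℕ} {s : Finset (ℕ × ℕ)} (hx : 2 ≤ x) (H1 : ∀ e ∈ s, 1 ≤ e.1 ∧ 1 ≤ e.2)

lemma filter_addFirst (Q : ℕ × ℕ → Prop) [DecidablePred Q] (H1 : ∀ e ∈ s, 1 ≤ e.1 ∧ 1 ≤ e.2)
    (Q' : ℕ × ℕ → Prop) [DecidablePred Q']
    (hiff : ∀ e ∈ s, Q (phi x e) ↔ Q' e) :
    ((addFirst x s).filter Q).card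
      = (if Q (1, x) then 1 else 0) + (s.filter Q').card := by
  rw [addFirst]
  show ((insert (1,x) (s.image (phi x))).filter Q).card = _
  rw [Finset.filter_insert]
  have himg : ((s.image (phi x)).filter Q).card = (s.filter Q').card := by
    rw [Finset.filter_image, Finset.card_image_of_injective _ (phi_injective x)]
    congr 1
    exact Finset.filter_congr fun e he => hiff e he
  split
  · rw [Finset.card_insert_of_notMem (fun h => notMem_image_phi H1 (Finset.mem_filter.1 h).1),
      himg]
    omega
  · rw [himg]; omega

include hx H1 in
lemma cGap_addFirst_le {j : ℕ} (hj : j + 2 ≤ x) :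
    cGap (addFirst x s) (j + 2) = cGap s (j + 1) + 1 := by
  rw [cGap, cGap, filter_addFirst _ H1 (fun e => e.1 < j + 1 ∧ j + 1 ≤ e.2)]
  · rw [if_pos (by constructor <;> omega)]; omega
  · intro e he
    simp only [phi]
    rw [shiftV_lt_left (g := j + 2) hj,
      show (j + 2 ≤ shiftV x e.2) ↔ ¬ (shiftV x e.2 < j + 2) from not_lt.symm,
      shiftV_lt_left hj]
    omega

include hx H1 in
lemma dGap_addFirst_le {j : ℕ} (hj : j + 2 ≤ x) :
    dGap (addFirst x s) (j + 2) = dGap s (j + 1) := by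
  rw [dGap, dGap, filter_addFirst _ H1 (fun e => e.2 < j + 1)]
  · rw [if_neg (by simp; omega)]; omega
  · intro e he
    simp only [phi]
    rw [shiftV_lt_left hj]
    omega

include hx H1 in
lemma cGap_addFirst_gt {j : ℕ} (hj : x < j + 2) :
    cGap (addFirst x s) (j + 2) = cGap s j := by
  rw [cGap, cGap, filter_addFirst _ H1 (fun e => e.1 < j ∧ j ≤ e.2)]
  · rw [if_neg (by simp; omega)]; omega
  · intro e he
    simp only [phi]
    rw [shiftV_lt_right hj,
      show (j + 2 ≤ shiftV x e.2) ↔ ¬ (shiftV x e.2 < j + 2) from not_lt.symm,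
      shiftV_lt_right hj]
    omega

include hx H1 in
lemma dGap_addFirst_gt {j : ℕ} (hj : x < j + 2) :
    dGap (addFirst x s) (j + 2) = dGap s j + 1 := by
  rw [dGap, dGap, filter_addFirst _ H1 (fun e => e.2 < j)]
  · rw [if_pos (by simp; omega)]; omega
  · intro e he
    simp only [phi]
    rw [shiftV_lt_right hj]
    omega

include hx H1 in
lemma cGap_addFirst_one : cGap (addFirst x s) 1 = 0 := by
  rw [cGap, Finset.card_eq_zero, Finset.filter_eq_empty_iff]
  rintro e he
  rw [addFirst, Finset.mem_insert] at he
  rcases he with rfl | he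
  · simp
  · obtain ⟨f, hf, rfl⟩ := Finset.mem_image.1 he
    have := two_le_shiftV x f.1 (H1 f hf).1
    simp only [not_and]
    omega

include hx H1 in
lemma dGap_addFirst_one : dGap (addFirst x s) 1 = 0 := by
  rw [dGap, Finset.card_eq_zero, Finset.filter_eq_empty_iff]
  rintro e he
  rw [addFirst, Finset.mem_insert] at he
  rcases he with rfl | he
  · simp; omega
  · obtain ⟨f, hf, rfl⟩ := Finset.mem_image.1 he
    have := two_le_shiftV x f.2 (H1 f hf).2
    simp only []
    omega

include hx H1 in
lemma H1_addFirst : ∀ e ∈ addFirst x s, 1 ≤ e.1 ∧ 1 ≤ e.2 := by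
  intro e he
  rw [addFirst, Finset.mem_insert] at he
  rcases he with rfl | he
  · exact ⟨le_refl 1, by omega⟩
  · obtain ⟨f, hf, rfl⟩ := Finset.mem_image.1 he
    exact ⟨by have := two_le_shiftV x f.1 (H1 f hf).1; omega,
           by have := two_le_shiftV x f.2 (H1 f hf).2; omega⟩

end gaps

section rmap
variable {A : Type*} [AddCommGroup A] (α β : A) (m : ℕ) (u : List A)

lemma Rmap_length (hm : m + 1 ≤ u.length) : (Rmap α β (m + 1) u).length = u.length + 2 := by
  simp only [Rmap, List.length_cons, List.length_append, List.length_map, List.length_take,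
    List.length_drop, Nat.add_sub_cancel]
  omega

lemma Rmap_getD_zero : (Rmap α β (m + 1) u).getD 0 0 = u.getD m 0 := by
  simp [Rmap]

lemma Rmap_getD_low {j : ℕ} (hj : j < m + 1) (hm : m + 1 ≤ u.length) :
    (Rmap α β (m + 1) u).getD (j + 1) 0
      = u.getD j 0 + (u.getD m 0 - u.getD 0 0 + α) := by
  have hlt : j < ((u.take (m+1)).map
      (fun y => y + (u.getD m 0 - u.getD 0 0 + α))).length := by
    simp only [List.length_map, List.length_take]; omega
  have hju : j < u.length := by omega
  simp only [Rmap, Nat.add_sub_cancel, List.getD_cons_succ]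
  rw [List.getD_append _ _ _ _ hlt, List.getD_eq_getElem _ _ hlt, List.getElem_map,
    List.getElem_take, ← List.getD_eq_getElem u 0 hju]

lemma Rmap_getD_high {k : ℕ} (hk : m ≤ k) (hku : k < u.length) :
    (Rmap α β (m + 1) u).getD (k + 2) 0
      = u.getD k 0 + (u.getD m 0 - u.getD 0 0 + β) := by
  have hA : ((u.take (m+1)).map
      (fun y => y + (u.getD m 0 - u.getD 0 0 + α))).length = m + 1 := by
    simp only [List.length_map, List.length_take]; omega
  have hlt : k - m < ((u.drop m).map
      (fun y => y + (u.getD m 0 - u.getD 0 0 + β))).length := by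
    simp only [List.length_map, List.length_drop]; omega
  simp only [Rmap, Nat.add_sub_cancel, List.getD_cons_succ]
  rw [List.getD_append_right _ _ _ _ (by rw [hA]; omega), hA,
    show k + 1 - (m + 1) = k - m from by omega,
    List.getD_eq_getElem _ _ hlt, List.getElem_map, List.getElem_drop]
  simp only [show m + (k - m) = k from by omega]
  rw [← List.getD_eq_getElem u 0 hku]

end rmap

lemma cGap_one_zero {s : Finset (ℕ × ℕ)} (H1 : ∀ e ∈ s, 1 ≤ e.1 ∧ 1 ≤ e.2) : cGap s 1 = 0 := by
  rw [cGap, Finset.card_eq_zero, Finset.filter_eq_empty_iff]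
  intro e he
  have := (H1 e he).1
  simp only [not_and]
  omega

lemma dGap_one_zero {s : Finset (ℕ × ℕ)} (H1 : ∀ e ∈ s, 1 ≤ e.1 ∧ 1 ≤ e.2) : dGap s 1 = 0 := by
  rw [dGap, Finset.card_eq_zero, Finset.filter_eq_empty_iff]
  intro e he
  have := (H1 e he).2
  omega

lemma key {A : Type*} [AddCommGroup A] (α β : A) {s : Finset (ℕ × ℕ)} {u : List A}
    (hu : IsSeq α β s u) :
    (∀ e ∈ s, 1 ≤ e.1 ∧ 1 ≤ e.2) ∧ u.length = 2 * s.card + 1 ∧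
    ∀ j, j < u.length →
      u.getD j 0 = (crStat s + cGap s (j + 1)) • α + (neStat s + dGap s (j + 1)) • β := by
  induction hu with
  | empty =>
    refine ⟨by simp, by simp, ?_⟩
    intro j hj
    have : j = 0 := by simpa using hj
    subst this
    simp [crStat, neStat, cGap, dGap]
  | step s u x hu h2 hx ih =>
    obtain ⟨H1, hlen, hinv⟩ := ih
    obtain ⟨m, rfl⟩ : ∃ m, x = m + 2 := ⟨x - 2, by omega⟩
    have hx2 : (2 : ℕ) ≤ m + 2 := by omega
    have hx1 : m + 2 - 1 = m + 1 := by omega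
    rw [hx1]
    have hm1 : m + 1 ≤ u.length := by omega
    have Hn := H1_addFirst hx2 H1
    have hlenN : (Rmap α β (m + 1) u).length = 2 * (addFirst (m+2) s).card + 1 := by
      rw [Rmap_length α β m u hm1, card_addFirst_s8 H1, hlen]; ring
    have crN := crStat_addFirst_s8 hx2 H1
    have neN := neStat_addFirst_s8 hx2 H1
    rw [hx1] at crN neN
    have c1 := cGap_one_zero H1
    have d1 := dGap_one_zero H1
    have getD0 : u.getD 0 0 = crStat s • α + neStat s • β := by
      have := hinv 0 (by omega)
      simpa [c1, d1] using this
    have getDm := hinv m (by omega)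
    refine ⟨Hn, hlenN, ?_⟩
    intro j hj
    rw [Rmap_length α β m u hm1] at hj
    rcases Nat.eq_zero_or_pos j with rfl | hpos
    · rw [Rmap_getD_zero, getDm, crN, neN, cGap_addFirst_one hx2 H1, dGap_addFirst_one hx2 H1,
        add_zero, add_zero]
    · rcases le_or_gt j (m + 1) with hle | hgt
      · obtain ⟨j', rfl⟩ : ∃ j', j = j' + 1 := ⟨j - 1, by omega⟩
        have hj' : j' < m + 1 := by omega
        rw [Rmap_getD_low α β m u hj' hm1, hinv j' (by omega), getDm, getD0, crN, neN,
          cGap_addFirst_le hx2 H1 (by omega : j' + 2 ≤ m + 2),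
          dGap_addFirst_le hx2 H1 (by omega : j' + 2 ≤ m + 2)]
        simp only [add_nsmul, one_nsmul]
        abel
      · obtain ⟨k, rfl⟩ : ∃ k, j = k + 2 := ⟨j - 2, by omega⟩
        have hk : m ≤ k := by omega
        have hku : k < u.length := by omega
        rw [Rmap_getD_high α β m u hk hku, hinv k (by omega), getDm, getD0, crN, neN,
          cGap_addFirst_gt hx2 H1 (by omega : m + 2 < k + 1 + 2),
          dGap_addFirst_gt hx2 H1 (by omega : m + 2 < k + 1 + 2)]
        simp only [add_nsmul, one_nsmul]
        abel

/-- for every abelian group `A`, every `α, β ∈ A`, and every matching `N` on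
`[2n]`, the first term of `seq_{α,β}(N)` equals `s_{α,β}(N) = cr(N)·α + ne(N)·β`. -/
theorem firstTerm_seq_eq_statistic {A : Type*} [AddCommGroup A] (α β : A)
    (n : ℕ) (N : Finset (ℕ × ℕ)) (hN : IsMatching n N)
    (u : List A) (hu : IsSeq α β N u) :
    u.getD 0 0 = crStat N • α + neStat N • β := by
  obtain ⟨H1, hlen, hinv⟩ := key α β hu
  have h0 := hinv 0 (by omega)
  simpa [cGap_one_zero H1, dGap_one_zero H1] using h0
end
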